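/- For every positional scoring rule f_s ∈ F_S, every profile σ over m ≥ 2 alternatives, and every k ∈ ℤ_+, f_s(Shuffle_{[2,m]}^k(σ)) = f_p(σ); in particular, all positional scoring rules produce the same output ranking on the shuffled profile Shuffle_{[2,m]}^k(σ). -/

import Mathlib

open scoped Classical

noncomputable section

/-- A strict ranking of the alternatives `A` among `m` positions: each alternative is
assigned its (0-indexed) position. -/
abbrev Ranking (A : Type*) (m : ℕ) := A ≃ Fin m

/-- A weak ranking: a complete and transitive binary relation (ties allowed).
`ge a b` means `a` is ranked weakly above `b`. -/
structure WeakRanking (A : Type*) where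
  ge : A → A → Prop
  total : ∀ a b, ge a b ∨ ge b a
  trans : ∀ a b c, ge a b → ge b c → ge a c

namespace WeakRanking

variable {A : Type*}

/-- `a` is ranked strictly above `b`. -/
def strict (r : WeakRanking A) (a b : A) : Prop := r.ge a b ∧ ¬ r.ge b a

/-- `a` and `b` are tied. -/
def tied (r : WeakRanking A) (a b : A) : Prop := r.ge a b ∧ r.ge b a

/-- The reversed weak ranking. -/
def rev (r : WeakRanking A) : WeakRanking A where
  ge a b := r.ge b a
  total a b := r.total b a
  trans _ _ _ h1 h2 := r.trans _ _ _ h2 h1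

/-- The all-tied weak ranking. -/
def allTied (A : Type*) : WeakRanking A :=
  ⟨fun _ _ => True, fun _ _ => Or.inl trivial, fun _ _ _ _ _ => trivial⟩

end WeakRanking

variable {A : Type*} {m : ℕ}

/-- The weak ranking induced by a strict ranking (smaller position = ranked higher). -/
def Ranking.toWeak (r : Ranking A m) : WeakRanking A where
  ge a b := r a ≤ r b
  total a b := le_total _ _
  trans _ _ _ h1 h2 := le_trans h1 h2

/-- The position-reversal permutation. -/
def finRevPerm (m : ℕ) : Equiv.Perm (Fin m) :=
  ⟨Fin.rev, Fin.rev, Fin.rev_rev, Fin.rev_rev⟩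

/-- The reversed strict ranking. -/
def Ranking.revR (r : Ranking A m) : Ranking A m := r.trans (finRevPerm m)

/-- Kendall-Tau distance with ties between two weak rankings: the sum over unordered pairs
of distinct alternatives of `D + T/2`, realized as half the sum over ordered pairs. -/
def KT [Fintype A] (r1 r2 : WeakRanking A) : ℝ :=
  (∑ p ∈ Finset.univ.offDiag,
      ((if (r1.strict p.1 p.2 ∧ r2.strict p.2 p.1) ∨ (r1.strict p.2 p.1 ∧ r2.strict p.1 p.2)
          then (1 : ℝ) else 0)
        + (if r1.tied p.1 p.2 ∨ r2.tied p.1 p.2 then (1 : ℝ) else 0) / 2)) / 2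

/-- A profile: the list of the voters' strict rankings. -/
abbrev Profile (A : Type*) (m : ℕ) := List (Ranking A m)

/-- A social welfare function. -/
abbrev SWF (A : Type*) (m : ℕ) := Profile A m → WeakRanking A

/-- Reverse every voter's ranking. -/
def revProfile (σ : Profile A m) : Profile A m := σ.map Ranking.revR

/-- A monotone positional scoring vector `1 = s₁ ≥ s₂ ≥ … ≥ sₘ = 0`. -/
structure ScoreVec (m : ℕ) where
  s : Fin m → ℝ
  anti : Antitone s
  first : ∀ h : 0 < m, s ⟨0, h⟩ = 1
  last : ∀ h : 0 < m, s ⟨m - 1, Nat.sub_lt h Nat.one_pos⟩ = 0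

/-- Total score of alternative `a` in profile `σ`. -/
def totalScore (sv : ScoreVec m) (σ : Profile A m) (a : A) : ℝ :=
  (σ.map fun r => sv.s (r a)).sum

/-- The positional scoring rule associated to a scoring vector. -/
def posSWF (sv : ScoreVec m) : SWF A m := fun σ =>
  { ge := fun a b => totalScore sv σ b ≤ totalScore sv σ a
    total := fun _ _ => le_total _ _
    trans := fun _ _ _ h1 h2 => le_trans h2 h1 }

/-- The plurality scoring vector `(1,0,…,0)`. -/
def pluralityVec (m : ℕ) (hm : 2 ≤ m) : ScoreVec m where
  s i := if i.val = 0 then 1 else 0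
  anti := by
    intro i j hij
    have h' : i.val ≤ j.val := hij
    dsimp only
    by_cases hj : j.val = 0
    · have hi : i.val = 0 := by omega
      simp [hi, hj]
    · by_cases hi : i.val = 0 <;> simp [hi, hj]
  first h := by simp
  last h := by
    have h' : m - 1 ≠ 0 := by omega
    simp [h']

/-- The veto scoring vector `(1,…,1,0)`. -/
def vetoVec (m : ℕ) (hm : 2 ≤ m) : ScoreVec m where
  s i := if i.val = m - 1 then 0 else 1
  anti := by
    intro i j hij
    have h' : i.val ≤ j.val := hij
    dsimp only
    by_cases hi : i.val = m - 1
    · have hj : j.val = m - 1 := by have := j.isLt; omega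
      simp [hi, hj]
    · by_cases hj : j.val = m - 1 <;> simp [hi, hj]
  first h := by
    have h' : (0 : ℕ) ≠ m - 1 := by omega
    simp [h']
  last h := by simp

/-- The reverse scoring vector, `s'_j = 1 - s_{m+1-j}`. -/
def ScoreVec.revVec (sv : ScoreVec m) : ScoreVec m where
  s j := 1 - sv.s j.rev
  anti := by
    intro i j hij
    have h1 : j.rev ≤ i.rev := by
      simp only [Fin.le_def, Fin.val_rev]
      have h' : i.val ≤ j.val := hij
      omega
    have h2 := sv.anti h1
    dsimp only
    linarith
  first h := by
    have h1 : (⟨0, h⟩ : Fin m).rev = ⟨m - 1, Nat.sub_lt h Nat.one_pos⟩ := by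
      ext
      simp [Fin.val_rev]
    show 1 - sv.s _ = _
    rw [h1, sv.last h]
    ring
  last h := by
    have h1 : (⟨m - 1, Nat.sub_lt h Nat.one_pos⟩ : Fin m).rev = ⟨0, h⟩ := by
      ext
      simp only [Fin.val_rev]
      omega
    show 1 - sv.s _ = _
    rw [h1, sv.first h]
    ring

/-- One side of the split of the profile `σ` given by assignment `β`. -/
def subProfile (σ : Profile A m) (β : Fin σ.length → Bool) (b : Bool) : Profile A m :=
  ((List.finRange σ.length).filter fun i => β i == b).map σ.get

/-- Apply an SWF, producing the all-tied ranking on an empty (sub)profile. -/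
def applySplit (f : SWF A m) (σ : Profile A m) : WeakRanking A :=
  if σ = [] then WeakRanking.allTied A else f σ

/-- Expected Kendall-Tau disagreement of `f` between the two sides of a uniformly random
split of `σ` (each voter placed independently and uniformly on one of the two sides). -/
def expDisagree [Fintype A] (f : SWF A m) (σ : Profile A m) : ℝ :=
  (∑ β : Fin σ.length → Bool,
      KT (applySplit f (subProfile σ β true)) (applySplit f (subProfile σ β false)))
    / 2 ^ σ.length

/-- Aggregation by Consistency over a set of SWFs: the rules minimizing expected
disagreement across a random split. -/
def AbC [Fintype A] (F : Set (SWF A m)) (σ : Profile A m) : Set (SWF A m) :=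
  {f | f ∈ F ∧ ∀ g ∈ F, expDisagree f σ ≤ expDisagree g σ}

/-- Aggregation by Consistency over a set of positional scoring vectors. -/
def AbCVec [Fintype A] (F : Set (ScoreVec m)) (σ : Profile A m) : Set (ScoreVec m) :=
  {sv | sv ∈ F ∧ ∀ sv' ∈ F, expDisagree (posSWF sv) σ ≤ expDisagree (posSWF sv') σ}

/-- All permutations of the positions that fix every position outside `S`. -/
def permsOn (S : Finset (Fin m)) : List (Equiv.Perm (Fin m)) :=
  (Finset.univ.filter fun π : Equiv.Perm (Fin m) => ∀ i ∉ S, π i = i).toList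

/-- The `k`-shuffling of profile `σ` with respect to the set of positions `S`: each voter's
ranking is replaced by `k·m!` copies, split evenly among the `|S|!` permutations of `S`. -/
def shuffle (S : Finset (Fin m)) (k : ℕ) (σ : Profile A m) : Profile A m :=
  σ.flatMap fun r =>
    (permsOn S).flatMap fun π =>
      List.replicate (k * Nat.factorial m / Nat.factorial S.card) (r.trans π)

/-- The positions `2,…,m` (0-indexed: `1,…,m-1`). -/
def tailPositions (m : ℕ) : Finset (Fin m) := Finset.univ.filter fun i => 1 ≤ i.val

/-- Number of voters ranking `a` first. -/
def topCount (σ : Profile A m) (a : A) : ℕ := σ.countP fun r => (r a).val == 0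

/-- A weak ranking has no ties among distinct alternatives. -/
def NoTies (w : WeakRanking A) : Prop := ∀ a b : A, a ≠ b → ¬ w.tied a b

/-- Probability (over a uniformly random split of `σ`) that the outputs of `f` on the two
sides order `a` and `b` strictly oppositely. -/
def probD [Fintype A] (f : SWF A m) (σ : Profile A m) (a b : A) : ℝ :=
  ((Finset.univ.filter fun β : Fin σ.length → Bool =>
      ((applySplit f (subProfile σ β true)).strict a b ∧
        (applySplit f (subProfile σ β false)).strict b a) ∨
      ((applySplit f (subProfile σ β true)).strict b a ∧
        (applySplit f (subProfile σ β false)).strict a b)).card : ℝ) / 2 ^ σ.length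

/-- Probability (over a uniformly random split of `σ`) that `a` and `b` are tied in the
output of `f` on at least one side. -/
def probT [Fintype A] (f : SWF A m) (σ : Profile A m) (a b : A) : ℝ :=
  ((Finset.univ.filter fun β : Fin σ.length → Bool =>
      (applySplit f (subProfile σ β true)).tied a b ∨
      (applySplit f (subProfile σ β false)).tied a b).card : ℝ) / 2 ^ σ.length

/-- A rule picking rule over sets of positional scoring vectors. -/
abbrev RPRVec (A : Type*) (m : ℕ) := Set (ScoreVec m) → Profile A m → Set (ScoreVec m)

/-- An RPR returns a nonempty subset of the candidate rules. -/
def IsRPR (Z : RPRVec A m) : Prop := ∀ F σ, Z F σ ⊆ F ∧ (Z F σ).Nonempty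

/-- Anonymity of an RPR: invariance under permuting voters. -/
def AnonymousRPR (Z : RPRVec A m) : Prop :=
  ∀ (F : Set (ScoreVec m)) (σ σ' : Profile A m), σ.Perm σ' → Z F σ = Z F σ'

/-- Reversal symmetry of an RPR. -/
def ReversalSymmetric (Z : RPRVec A m) : Prop :=
  ∀ F : Set (ScoreVec m), ScoreVec.revVec '' F = F →
    ∀ σ : Profile A m, ScoreVec.revVec '' (Z F σ) = Z F (revProfile σ)

/-- Plurality-shuffling consistency of an RPR. -/
def PSConsistent (hm : 2 ≤ m) (Z : RPRVec A m) : Prop :=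
  ∀ F : Set (ScoreVec m), F.Finite → pluralityVec m hm ∈ F →
    ∀ σ : Profile A m, NoTies (posSWF (pluralityVec m hm) σ) →
      ∃ k : ℕ, 1 ≤ k ∧ ∀ k', k ≤ k' →
        Z F (shuffle (tailPositions m) k' σ) = {pluralityVec m hm}

/-- Union consistency of an RPR. -/
def UnionConsistent (Z : RPRVec A m) : Prop :=
  ∀ (F : Set (ScoreVec m)) (σa σb : Profile A m), (Z F σa ∩ Z F σb).Nonempty →
    Z F (σa ++ σb) = Z F σa ∩ Z F σb

/-- The welfare-maximizing RPR with utility function `u`. -/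
def welfareMax (u : Ranking A m → WeakRanking A → ℝ) : RPRVec A m := fun F σ =>
  {sv | sv ∈ F ∧ ∀ sv' ∈ F,
      (σ.map fun r => u r (posSWF sv' σ)).sum ≤ (σ.map fun r => u r (posSWF sv σ)).sum}

/-- The SWF induced by a (vector-valued) RPR, where it is singleton-valued. -/
def inducedVec (Z : RPRVec A m) (F : Set (ScoreVec m)) : SWF A m := fun σ =>
  if h : ∃ sv, Z F σ = {sv} then posSWF h.choose σ else WeakRanking.allTied A

/-- The SWF induced by an (SWF-valued) RPR, where it is singleton-valued. -/
def inducedSWF (Z : Set (SWF A m) → Profile A m → Set (SWF A m)) (F : Set (SWF A m)) :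
    SWF A m := fun σ =>
  if h : ∃ f, Z F σ = {f} then h.choose σ else WeakRanking.allTied A

/-- The SWF induced by AbC over scoring vectors. -/
def inducedAbCVec [Fintype A] (F : Set (ScoreVec m)) : SWF A m := fun σ =>
  if h : ∃ sv, AbCVec F σ = {sv} then posSWF h.choose σ else WeakRanking.allTied A

/-- Anonymity of an SWF. -/
def AnonymousSWF (f : SWF A m) : Prop :=
  ∀ σ σ' : Profile A m, σ.Perm σ' → f σ = f σ'

/-- Relabeling of a weak ranking along a permutation of the alternatives. -/
def permuteWeak (π : Equiv.Perm A) (w : WeakRanking A) : WeakRanking A where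
  ge a b := w.ge (π.symm a) (π.symm b)
  total a b := w.total _ _
  trans _ _ _ h1 h2 := w.trans _ _ _ h1 h2

/-- Neutrality of an SWF: permuting the alternatives permutes the output accordingly. -/
def NeutralSWF (f : SWF A m) : Prop :=
  ∀ (π : Equiv.Perm A) (σ : Profile A m),
    f (σ.map fun r => π.symm.trans r) = permuteWeak π (f σ)

/-- `a` pairwise defeats `b` in profile `σ`. -/
def pairwiseDefeats (σ : Profile A m) (a b : A) : Prop :=
  (σ.countP fun r => decide (r b < r a)) < (σ.countP fun r => decide (r a < r b))

/-- A set `S` is dominant if every member pairwise defeats every non-member. -/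
def DominantSet [Fintype A] (σ : Profile A m) (S : Finset A) : Prop :=
  ∀ a ∈ S, ∀ b ∉ S, pairwiseDefeats σ a b

/-- The Smith set: the smallest dominant set (the intersection of all dominant sets). -/
def SmithSet [Fintype A] (σ : Profile A m) : Finset A :=
  Finset.univ.filter fun a => ∀ S : Finset A, DominantSet σ S → a ∈ S

/-- `a` is among the top-ranked alternatives of `w`. -/
def isTop (w : WeakRanking A) (a : A) : Prop := ∀ b, w.ge a b

def SmithCriterion [Fintype A] (f : SWF A m) : Prop :=
  ∀ (σ : Profile A m) (a : A), isTop (f σ) a → a ∈ SmithSet σ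

def CondorcetConsistent [Fintype A] (f : SWF A m) : Prop :=
  ∀ (σ : Profile A m) (c : A), SmithSet σ = {c} →
    ∀ a, isTop (f σ) a → a ∈ SmithSet σ

def MajorityWinnerCriterion [Fintype A] (f : SWF A m) : Prop :=
  ∀ (σ : Profile A m) (c : A), SmithSet σ = {c} → σ.length < 2 * topCount σ c →
    ∀ a, isTop (f σ) a → a ∈ SmithSet σ

def PairwiseMajorityConsistent (f : SWF A m) : Prop :=
  ∀ (σ : Profile A m) (r : WeakRanking A),
    (∀ a b, r.strict a b ↔ pairwiseDefeats σ a b) → f σ = r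

def UnanimousSWF (f : SWF A m) : Prop :=
  ∀ (σ : Profile A m) (r : Ranking A m), σ ≠ [] → (∀ x ∈ σ, x = r) →
    f σ = Ranking.toWeak r

/-- Rank of `a` in weak ranking `w`: one plus the number of alternatives strictly above. -/
def rankIn [Fintype A] (w : WeakRanking A) (a : A) : ℕ :=
  1 + (Finset.univ.filter fun b => w.strict b a).card

/-- `r'` is obtained from `r` by (weakly) raising `a`, everything else unchanged. -/
def RaisesWeak (a : A) (r r' : Ranking A m) : Prop :=
  r' a ≤ r a ∧ ∀ b c : A, b ≠ a → c ≠ a → (r b < r c ↔ r' b < r' c)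

/-- Monotonicity of an SWF: raising an alternative never hurts its rank. -/
def MonotonicSWF [Fintype A] (f : SWF A m) : Prop :=
  ∀ (a : A) (σ σ' : Profile A m), List.Forall₂ (RaisesWeak a) σ σ' →
    rankIn (f σ') a ≤ rankIn (f σ) a

/-- Total score of `a` for a list of (position ↦ alternative) ballots of length `ℓ`. -/
def ballotScore [Fintype A] {ℓ : ℕ} (sv : ScoreVec ℓ) (P : List (Fin ℓ → A)) (a : A) : ℝ :=
  (P.map fun b => ∑ i : Fin ℓ, if b i = a then sv.s i else 0).sum

/-- A scoring vector achieves perfect consistency on the given split `(P1, P2)`. -/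
def PerfectConsistency [Fintype A] {ℓ : ℕ} (sv : ScoreVec ℓ)
    (P1 P2 : List (Fin ℓ → A)) : Prop :=
  ∀ a b : A, a ≠ b →
    0 < (ballotScore sv P1 a - ballotScore sv P1 b) *
        (ballotScore sv P2 a - ballotScore sv P2 b)

/-- Complete a `k`-partial ballot to a full ballot on `m` positions by placing the missing
alternatives at the bottom, in a fixed order. -/
def completeBallot [Fintype A] [LinearOrder A] {k m : ℕ} (hk : 0 < k)
    (b : Fin k → A) : Fin m → A := fun j =>
  if h : j.val < k then b ⟨j.val, h⟩
  else ((Finset.univ \ Finset.univ.image b).sort (· ≤ ·)).getD (j.val - k) (b ⟨0, hk⟩)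

/-- `k`-shuffling for (position ↦ alternative) ballots. -/
def shuffleBallots {m : ℕ} (S : Finset (Fin m)) (k : ℕ) (P : List (Fin m → A)) :
    List (Fin m → A) :=
  P.flatMap fun f =>
    (permsOn S).flatMap fun π =>
      List.replicate (k * Nat.factorial m / Nat.factorial S.card) (f ∘ π.symm)

/-
Shuffling the positions `2, …, m` leaves the top position in place and averages the scores
of all other positions: over the `N` permutations fixing the top, position `1` earns `N`
and every other position earns a common `D < N`, because some permutation moves it to the
last position, which scores `0`. Hence each alternative's shuffled score is
`c · ((N - D) · (plurality score) + D · |σ|)` with `c > 0`, an increasing affine function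
of its plurality score, and every scoring rule on the shuffled profile ranks like plurality.
-/

theorem WeakRanking.ext {r₁ r₂ : WeakRanking A} (h : r₁.ge = r₂.ge) : r₁ = r₂ := by
  cases r₁; cases r₂; cases h; rfl

theorem ScoreVec.le_one (sv : ScoreVec m) (j : Fin m) : sv.s j ≤ 1 :=
  sv.first j.pos ▸ sv.anti (Nat.zero_le j.val)

theorem posSWF_eq_of_totalScore_affine {sv sv' : ScoreVec m} {τ σ : Profile A m} {α β : ℝ}
    (hα : 0 < α) (h : ∀ a, totalScore sv τ a = α * totalScore sv' σ a + β) :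
    posSWF sv τ = posSWF sv' σ := by
  refine WeakRanking.ext (funext₂ fun a b => propext ?_)
  show totalScore sv τ b ≤ totalScore sv τ a ↔ totalScore sv' σ b ≤ totalScore sv' σ a
  rw [h, h, add_le_add_iff_right, mul_le_mul_iff_right₀ hα]

def fixingPerms (S : Finset (Fin m)) : Finset (Equiv.Perm (Fin m)) :=
  Finset.univ.filter fun π => ∀ i ∉ S, π i = i

def shuffledScore (sv : ScoreVec m) (S : Finset (Fin m)) (p : Fin m) : ℝ :=
  ∑ π ∈ fixingPerms S, sv.s (π p)

theorem totalScore_shuffle (sv : ScoreVec m) (S : Finset (Fin m)) (k : ℕ) (σ : Profile A m)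
    (a : A) :
    totalScore sv (shuffle S k σ) a =
      (k * m.factorial / S.card.factorial : ℕ) *
        (σ.map fun r => shuffledScore sv S (r a)).sum := by
  simp only [totalScore, shuffle, permsOn, List.flatMap_def, List.map_flatten, List.sum_flatten,
    List.map_map, Function.comp_def, List.map_replicate, List.sum_replicate, nsmul_eq_mul,
    Finset.sum_map_toList, shuffledScore, ← List.sum_map_mul_left, Finset.mul_sum]
  rfl

theorem shuffle_multiplicity_pos (S : Finset (Fin m)) {k : ℕ} (hk : 1 ≤ k) :
    0 < k * m.factorial / S.card.factorial :=
  Nat.div_pos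
    ((Nat.factorial_le (S.card_le_univ.trans_eq (Fintype.card_fin m))).trans
      (Nat.le_mul_of_pos_left _ hk))
    (Nat.factorial_pos _)

theorem swap_mem_fixingPerms_iff {S : Finset (Fin m)} {p q : Fin m} (hp : p ∈ S) (hq : q ∈ S)
    {π : Equiv.Perm (Fin m)} : π * Equiv.swap p q ∈ fixingPerms S ↔ π ∈ fixingPerms S := by
  have hswap : ∀ i ∉ S, Equiv.swap p q i = i := fun i hi =>
    Equiv.swap_apply_of_ne_of_ne (ne_of_mem_of_not_mem hp hi).symm
      (ne_of_mem_of_not_mem hq hi).symm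
  simp only [fixingPerms, Finset.mem_filter, Finset.mem_univ, true_and, Equiv.Perm.mul_apply]
  exact forall₂_congr fun i hi => by rw [hswap i hi]

theorem shuffledScore_eq_of_mem (sv : ScoreVec m) {S : Finset (Fin m)} {p q : Fin m}
    (hp : p ∈ S) (hq : q ∈ S) : shuffledScore sv S p = shuffledScore sv S q :=
  Finset.sum_equiv (Equiv.mulRight (Equiv.swap p q))
    (fun _ => (swap_mem_fixingPerms_iff hp hq).symm) (fun π _ => by simp)

theorem shuffledScore_of_notMem (sv : ScoreVec m) {S : Finset (Fin m)} {p : Fin m}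
    (hp : p ∉ S) : shuffledScore sv S p = (fixingPerms S).card * sv.s p := by
  rw [shuffledScore, Finset.sum_congr rfl fun π hπ => by rw [(Finset.mem_filter.1 hπ).2 p hp],
    Finset.sum_const, nsmul_eq_mul]

theorem shuffledScore_lt_card (sv : ScoreVec m) {S : Finset (Fin m)} {p q : Fin m} (hp : p ∈ S)
    (hq : q ∈ S) (hsq : sv.s q < 1) : shuffledScore sv S p < (fixingPerms S).card := by
  have hswap : Equiv.swap p q ∈ fixingPerms S := by
    simpa using (swap_mem_fixingPerms_iff hp hq (π := 1)).2 (by simp [fixingPerms])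
  calc shuffledScore sv S p < ∑ _π ∈ fixingPerms S, (1 : ℝ) :=
        Finset.sum_lt_sum (fun π _ => sv.le_one _) ⟨_, hswap, by simpa using hsq⟩
    _ = (fixingPerms S).card := by simp

theorem shuffledScore_tailPositions (hm : 2 ≤ m) (sv : ScoreVec m) (p : Fin m) :
    let D := shuffledScore sv (tailPositions m) ⟨1, hm⟩
    shuffledScore sv (tailPositions m) p =
      D + ((fixingPerms (tailPositions m)).card - D) * (pluralityVec m hm).s p := by
  intro D
  by_cases hp : p.val = 0
  · have hp' : p ∉ tailPositions m := by simp [tailPositions, hp]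
    have hsp : sv.s p = 1 := (congrArg sv.s (Fin.ext hp)).trans (sv.first (by omega))
    simp [D, shuffledScore_of_notMem sv hp', hsp, pluralityVec, hp]
  · have hp' : p ∈ tailPositions m := by simpa [tailPositions] using Nat.one_le_iff_ne_zero.2 hp
    simp [D, shuffledScore_eq_of_mem sv hp' (q := ⟨1, hm⟩) (by simp [tailPositions]),
      pluralityVec, hp]

theorem totalScore_shuffle_tailPositions (hm : 2 ≤ m) (sv : ScoreVec m) (k : ℕ)
    (σ : Profile A m) (a : A) :
    let c : ℝ := (k * m.factorial / (tailPositions m).card.factorial : ℕ)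
    let D := shuffledScore sv (tailPositions m) ⟨1, hm⟩
    totalScore sv (shuffle (tailPositions m) k σ) a =
      c * ((fixingPerms (tailPositions m)).card - D) * totalScore (pluralityVec m hm) σ a
        + c * (σ.length * D) := by
  intro c D
  have hD : ∀ p, shuffledScore sv (tailPositions m) p =
      D + ((fixingPerms (tailPositions m)).card - D) * (pluralityVec m hm).s p :=
    shuffledScore_tailPositions hm sv
  rw [totalScore_shuffle, totalScore]
  simp only [hD, List.sum_map_add, List.sum_map_mul_left, List.map_const', List.sum_replicate,
    nsmul_eq_mul]
  ring

theorem posSWF_shuffle_tailPositions (hm : 2 ≤ m) (sv : ScoreVec m) (σ : Profile A m) {k : ℕ}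
    (hk : 1 ≤ k) :
    posSWF sv (shuffle (tailPositions m) k σ) = posSWF (pluralityVec m hm) σ := by
  refine posSWF_eq_of_totalScore_affine (mul_pos ?_ (sub_pos.2 ?_))
    (totalScore_shuffle_tailPositions hm sv k σ)
  · exact_mod_cast shuffle_multiplicity_pos _ hk
  · exact shuffledScore_lt_card sv (q := ⟨m - 1, by omega⟩) (by simp [tailPositions])
      (by simp [tailPositions]; omega) (by rw [sv.last (by omega)]; norm_num)

theorem shuffle_collapses_to_plurality_general {A : Type*} {m : ℕ} (hm : 2 ≤ m)
    (sv : ScoreVec m) (σ : Profile A m) (k : ℕ) (hk : 1 ≤ k) :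
    posSWF sv (shuffle (tailPositions m) k σ) = posSWF (pluralityVec m hm) σ ∧
    ∀ sv' : ScoreVec m,
      posSWF sv (shuffle (tailPositions m) k σ)
        = posSWF sv' (shuffle (tailPositions m) k σ) :=
  ⟨posSWF_shuffle_tailPositions hm sv σ hk, fun sv' =>
    (posSWF_shuffle_tailPositions hm sv σ hk).trans
      (posSWF_shuffle_tailPositions hm sv' σ hk).symm⟩

/-- For every positional scoring rule `f_s`, every profile `σ` on `m ≥ 2`
alternatives and every `k ∈ ℤ₊`, `f_s(Shuffle_{[2,m]}^k(σ)) = f_p(σ)`; in particular all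
positional scoring rules produce the same output on the shuffled profile. -/
theorem shuffle_collapses_to_plurality {A : Type*} [Fintype A] {m : ℕ} (hm : 2 ≤ m)
    (hcard : Fintype.card A = m) (sv : ScoreVec m) (σ : Profile A m) (k : ℕ) (hk : 1 ≤ k) :
    posSWF sv (shuffle (tailPositions m) k σ) = posSWF (pluralityVec m hm) σ ∧
    ∀ sv' : ScoreVec m,
      posSWF sv (shuffle (tailPositions m) k σ)
        = posSWF sv' (shuffle (tailPositions m) k σ) :=
  shuffle_collapses_to_plurality_general hm sv σ k hk
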